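/- Let ω ∈ {0,1,2}^ℕ be a constant sequence. Then the Grigorchuk group G_ω is isomorphic to the infinite dihedral group D_∞. -/

import Mathlib

namespace Grig

/-- Sequences ω ∈ {0,1,2}^ℕ (0-indexed: `ω n` is the paper's ω_{n+1}). -/
abbrev Seq := ℕ → Fin 3

/-- The shifted sequence σω. -/
def shift (ω : Seq) : Seq := fun n => ω (n + 1)

/-- The n-fold shifted sequence σⁿω. -/
def shiftn (n : ℕ) (ω : Seq) : Seq := fun m => ω (m + n)

/-- The rooted automorphism `a`, as a map on words over {0,1} (encoded as `List Bool`). -/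
def aMap : List Bool → List Bool
  | [] => []
  | x :: w => (!x) :: w

lemma aMap_invol : ∀ w, aMap (aMap w) = w := by
  intro w; cases w <;> simp [aMap]

/-- The rooted automorphism `a`. -/
def aPerm : Equiv.Perm (List Bool) := ⟨aMap, aMap, aMap_invol, aMap_invol⟩

/-- The directed automorphism with "trivial tag" `k` of the Grigorchuk group `G_ω`:
`k = 2` gives `b_ω`, `k = 1` gives `c_ω`, `k = 0` gives `d_ω`.  Its section at the
vertex 1 is the corresponding automorphism for σω, and its section at the vertex 0
is `a` if ω₁ ≠ k and trivial if ω₁ = k. -/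
def genMap (k : Fin 3) : Seq → List Bool → List Bool
  | _, [] => []
  | ω, false :: w => false :: (if ω 0 = k then w else aMap w)
  | ω, true :: w => true :: genMap k (shift ω) w

lemma genMap_invol (k : Fin 3) : ∀ (w : List Bool) (ω : Seq), genMap k ω (genMap k ω w) = w := by
  intro w
  induction w with
  | nil => intro ω; rfl
  | cons x w ih =>
      intro ω
      cases x with
      | false => by_cases h : ω 0 = k <;> simp [genMap, h, aMap_invol]
      | true => simp [genMap, ih]

def genPerm (k : Fin 3) (ω : Seq) : Equiv.Perm (List Bool) :=
  ⟨genMap k ω, genMap k ω, fun w => genMap_invol k w ω, fun w => genMap_invol k w ω⟩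

/-- The generator `b_ω`. -/
def b (ω : Seq) : Equiv.Perm (List Bool) := genPerm 2 ω
/-- The generator `c_ω`. -/
def c (ω : Seq) : Equiv.Perm (List Bool) := genPerm 1 ω
/-- The generator `d_ω`. -/
def d (ω : Seq) : Equiv.Perm (List Bool) := genPerm 0 ω

/-- The Grigorchuk group `G_ω = ⟨a, b_ω, c_ω, d_ω⟩`, as a subgroup of the group of
permutations of the vertices of the binary rooted tree.  (Every generator preserves
word length and prefixes, so `G_ω` consists of automorphisms of the tree.) -/
def G (ω : Seq) : Subgroup (Equiv.Perm (List Bool)) :=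
  Subgroup.closure {aPerm, b ω, c ω, d ω}

lemma aPerm_mem (ω : Seq) : aPerm ∈ G ω := Subgroup.subset_closure (by simp)
lemma b_mem (ω : Seq) : b ω ∈ G ω := Subgroup.subset_closure (by simp)
lemma c_mem (ω : Seq) : c ω ∈ G ω := Subgroup.subset_closure (by simp)
lemma d_mem (ω : Seq) : d ω ∈ G ω := Subgroup.subset_closure (by simp)

/-- `a` as an element of `G_ω`. -/
def aSub (ω : Seq) : ↥(G ω) := ⟨aPerm, aPerm_mem ω⟩
/-- `b_ω` as an element of `G_ω`. -/
def bSub (ω : Seq) : ↥(G ω) := ⟨b ω, b_mem ω⟩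
/-- `c_ω` as an element of `G_ω`. -/
def cSub (ω : Seq) : ↥(G ω) := ⟨c ω, c_mem ω⟩
/-- `d_ω` as an element of `G_ω`. -/
def dSub (ω : Seq) : ↥(G ω) := ⟨d ω, d_mem ω⟩

/-- The subgroup of permutations of the tree fixing every vertex of level `n`. -/
def levelStab (n : ℕ) : Subgroup (Equiv.Perm (List Bool)) where
  carrier := {f | ∀ w : List Bool, w.length = n → f w = w}
  one_mem' := by intro w _; rfl
  mul_mem' := by
    intro f g hf hg w hw
    rw [Equiv.Perm.mul_apply, hg w hw, hf w hw]
  inv_mem' := by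
    intro f hf w hw
    calc f⁻¹ w = f⁻¹ (f w) := by rw [hf w hw]
    _ = w := f.symm_apply_apply w

/-- The `n`-th level stabiliser `St_{G_ω}(n)` (as a subgroup of the ambient
permutation group). -/
def St (ω : Seq) (n : ℕ) : Subgroup (Equiv.Perm (List Bool)) := G ω ⊓ levelStab n

/-- The `n`-th level stabiliser `St_{G_ω}(n)` seen as a subgroup of `G_ω`. -/
def stab (ω : Seq) (n : ℕ) : Subgroup ↥(G ω) := (levelStab n).subgroupOf (G ω)

lemma aMap_length (w : List Bool) : (aMap w).length = w.length := by
  cases w <;> simp [aMap]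

lemma genMap_length (k : Fin 3) :
    ∀ (w : List Bool) (ω : Seq), (genMap k ω w).length = w.length := by
  intro w
  induction w with
  | nil => intro ω; rfl
  | cons x w ih =>
      intro ω
      cases x with
      | false => by_cases h : ω 0 = k <;> simp [genMap, h, aMap_length]
      | true => simp [genMap, ih]

/-- The subgroup of length-preserving permutations of the set of words. -/
def lenPres : Subgroup (Equiv.Perm (List Bool)) where
  carrier := {f | ∀ w : List Bool, (f w).length = w.length}
  one_mem' := by intro w; rfl
  mul_mem' := by
    intro f g hf hg w
    rw [Equiv.Perm.mul_apply, hf, hg]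
  inv_mem' := by
    intro f hf w
    conv_rhs => rw [← show f (f⁻¹ w) = w from f.apply_symm_apply w]
    rw [hf]

lemma G_le_lenPres (ω : Seq) : G ω ≤ lenPres := by
  rw [G]
  refine (Subgroup.closure_le _).2 ?_
  intro x hx
  simp only [Set.mem_insert_iff, Set.mem_singleton_iff] at hx
  rcases hx with rfl | rfl | rfl | rfl
  · exact fun w => aMap_length w
  · exact fun w => genMap_length 2 w ω
  · exact fun w => genMap_length 1 w ω
  · exact fun w => genMap_length 0 w ω

instance stab_normal (ω : Seq) (n : ℕ) : (stab ω n).Normal := by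
  constructor
  intro h hh g
  simp only [stab, Subgroup.mem_subgroupOf] at hh ⊢
  intro w hw
  have hginv : ((g : Equiv.Perm (List Bool))⁻¹ w).length = n := by
    rw [G_le_lenPres ω ((G ω).inv_mem g.2) w, hw]
  have : ((h : Equiv.Perm (List Bool))) ((g : Equiv.Perm (List Bool))⁻¹ w)
      = (g : Equiv.Perm (List Bool))⁻¹ w := hh _ hginv
  simp only [Subgroup.coe_mul, InvMemClass.coe_inv, Equiv.Perm.mul_apply]
  rw [this]
  exact Equiv.apply_symm_apply _ w

/-- A (spherical) system of generators of a group. -/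
def SphericalSystem {Q : Type*} [Group Q] {r : ℕ} (T : Fin r → Q) : Prop :=
  3 ≤ r ∧ (∀ i, T i ≠ 1) ∧ Subgroup.closure (Set.range T) = ⊤ ∧ (List.ofFn T).prod = 1

/-- The set Σ(T): the union of all conjugates of the cyclic subgroups generated by
the entries of `T`. -/
def SigmaSet {Q : Type*} [Group Q] {r : ℕ} (T : Fin r → Q) : Set Q :=
  ⋃ (g : Q) (i : Fin r), (fun x => g⁻¹ * x * g) '' (Subgroup.zpowers (T i) : Set Q)

/-- An (unmixed) ramification structure of size `(r₁, r₂)` for a group `Q`. -/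
def HasRamificationStructure (Q : Type*) [Group Q] (r₁ r₂ : ℕ) : Prop :=
  ∃ (T₁ : Fin r₁ → Q) (T₂ : Fin r₂ → Q),
    SphericalSystem T₁ ∧ SphericalSystem T₂ ∧ SigmaSet T₁ ∩ SigmaSet T₂ = {1}

/-- `i_k(ω) = min {n ≥ 1 : ω_n = k}` (meaningful when some entry of ω equals `k`;
with our 0-indexing this is `sInf {n | ω n = k} + 1`). -/
noncomputable def ikFin (k : Fin 3) (ω : Seq) : ℕ := sInf {n | ω n = k} + 1

/-- `m(ω) = max {n ≥ 1 : ω_1 = ⋯ = ω_n}` for a non-constant sequence ω;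
with our 0-indexing this is the least index where ω differs from ω 0. -/
noncomputable def mval (ω : Seq) : ℕ := sInf {n | ω n ≠ ω 0}


/-- The normal closure of the element `x` relative to the subgroup `H`:
the subgroup generated by all `H`-conjugates of `x`. -/
def nclIn (H : Subgroup (Equiv.Perm (List Bool))) (x : Equiv.Perm (List Bool)) :
    Subgroup (Equiv.Perm (List Bool)) :=
  Subgroup.closure {y | ∃ g ∈ H, y = g * x * g⁻¹}

/-- The `d`-generator of `G_ω`: `d_ω` if ω₁ = 0, `c_ω` if ω₁ = 1 and `b_ω` if ω₁ = 2;
with our encoding this is simply `genPerm (ω 0) ω`. -/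
def dGenPerm (ω : Seq) : Equiv.Perm (List Bool) := genPerm (ω 0) ω

/-- The subgroup of permutations fixing every word that does not have `u` as a prefix. -/
def awayStab (u : List Bool) : Subgroup (Equiv.Perm (List Bool)) where
  carrier := {f | ∀ w : List Bool, ¬ u <+: w → f w = w}
  one_mem' := by intro w _; rfl
  mul_mem' := by
    intro f g hf hg w hw
    rw [Equiv.Perm.mul_apply, hg w hw, hf w hw]
  inv_mem' := by
    intro f hf w hw
    calc f⁻¹ w = f⁻¹ (f w) := by rw [hf w hw]
    _ = w := f.symm_apply_apply w

/-- The rigid vertex stabiliser `Rist_{G_ω}(u)`. -/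
def Rist (ω : Seq) (u : List Bool) : Subgroup (Equiv.Perm (List Bool)) :=
  G ω ⊓ awayStab u

/-- The section map φ_u : for an automorphism `f` fixing the vertex `u`, the value
`sectionFun u f` is the section of `f` at `u` (as a map on words). -/
def sectionFun (u : List Bool) (f : Equiv.Perm (List Bool)) : List Bool → List Bool :=
  fun v => (f (u ++ v)).drop u.length

/-- The `d`-generator `x_ω` of `G_ω`, as an element of `G_ω`. -/
def xGen (ω : Seq) : ↥(G ω) :=
  if ω 0 = 0 then ⟨d ω, Subgroup.subset_closure (by simp)⟩
  else if ω 0 = 1 then ⟨c ω, Subgroup.subset_closure (by simp)⟩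
  else ⟨b ω, Subgroup.subset_closure (by simp)⟩

/-- The `c`-generator `y_ω` of `G_ω` (determined by ω_{m(ω)+1}), as an element of `G_ω`. -/
noncomputable def yGen (ω : Seq) : ↥(G ω) :=
  if ω (mval ω) = 0 then ⟨d ω, Subgroup.subset_closure (by simp)⟩
  else if ω (mval ω) = 1 then ⟨c ω, Subgroup.subset_closure (by simp)⟩
  else ⟨b ω, Subgroup.subset_closure (by simp)⟩

open scoped Classical in
/-- The bound `M` of the main theorem. -/
noncomputable def Mval (ω : Seq) : ℕ :=
  if ∀ k : Fin 3, ∃ n, shift ω n = k then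
    (Finset.univ.sup fun k : Fin 3 => ikFin k (shift ω)) + 4
  else if ∀ n, shift ω n = shift ω 0 then 4
  else ((Finset.univ.filter fun k : Fin 3 => ∃ n, shift ω n = k).sup
          fun k => ikFin k (shift ω)) + 4


end Grig

namespace Grig

section ConstAux

variable {ω : Seq} {j : Fin 3}

lemma shift_eq_self (hc : ∀ m, ω m = ω 0) : shift ω = ω := by
  funext n
  show ω (n + 1) = ω n
  rw [hc (n + 1), hc n]

lemma genMap_const_self (hc : ∀ m, ω m = ω 0) : ∀ w, genMap (ω 0) ω w = w := by
  intro w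
  induction w with
  | nil => rfl
  | cons x w ih =>
    cases x with
    | false => simp [genMap]
    | true => simp [genMap, shift_eq_self hc, ih]

lemma genPerm_const_self (hc : ∀ m, ω m = ω 0) : genPerm (ω 0) ω = 1 := by
  apply Equiv.ext
  intro w
  show genMap (ω 0) ω w = w
  exact genMap_const_self hc w

lemma genMap_const_ne (hc : ∀ m, ω m = ω 0) {m m' : Fin 3}
    (hm : m ≠ ω 0) (hm' : m' ≠ ω 0) : ∀ w, genMap m ω w = genMap m' ω w := by
  intro w
  induction w with
  | nil => rfl
  | cons x w ih =>
    cases x with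
    | false =>
      have h1 : ¬ (ω 0 = m) := fun e => hm e.symm
      have h2 : ¬ (ω 0 = m') := fun e => hm' e.symm
      simp [genMap, h1, h2]
    | true => simp [genMap, shift_eq_self hc, ih]

lemma tA_false (hc : ∀ m, ω m = ω 0) (hj : j ≠ ω 0) (v : List Bool) :
    (aPerm * genPerm j ω) (false :: v) = true :: aMap v := by
  have h1 : ¬ (ω 0 = j) := fun e => hj e.symm
  simp [aPerm, genPerm, genMap, aMap, h1, Equiv.Perm.mul_apply]

lemma tA_true (hc : ∀ m, ω m = ω 0) (hj : j ≠ ω 0) (v : List Bool) :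
    (aPerm * genPerm j ω) (true :: v) = false :: genMap j ω v := by
  simp [aPerm, genPerm, genMap, aMap, shift_eq_self hc, Equiv.Perm.mul_apply]

lemma tA_sq_true (hc : ∀ m, ω m = ω 0) (hj : j ≠ ω 0) (v : List Bool) :
    ((aPerm * genPerm j ω) ^ 2) (true :: v) = true :: (aPerm * genPerm j ω) v := by
  rw [pow_two, Equiv.Perm.mul_apply, tA_true hc hj, tA_false hc hj]
  rfl

lemma tA_pow_true (hc : ∀ m, ω m = ω 0) (hj : j ≠ ω 0) : ∀ (k : ℕ) (v : List Bool),
    ((aPerm * genPerm j ω) ^ (2 * k)) (true :: v)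
      = true :: ((aPerm * genPerm j ω) ^ k) v := by
  intro k
  induction k with
  | zero => intro v; simp
  | succ n ih =>
    intro v
    have e : 2 * (n + 1) = 2 * n + 2 := by ring
    rw [e, pow_add, Equiv.Perm.mul_apply, tA_sq_true hc hj, ih, pow_succ,
      Equiv.Perm.mul_apply]
    rfl

lemma tA_false_nil (hc : ∀ m, ω m = ω 0) (hj : j ≠ ω 0) :
    (aPerm * genPerm j ω) [false] = [true] := by
  simpa [aMap] using tA_false hc hj []

lemma tA_true_nil (hc : ∀ m, ω m = ω 0) (hj : j ≠ ω 0) :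
    (aPerm * genPerm j ω) [true] = [false] := by
  simpa [genMap] using tA_true hc hj []

lemma tA_pow_len1 (hc : ∀ m, ω m = ω 0) (hj : j ≠ ω 0) : ∀ k : ℕ,
    ((aPerm * genPerm j ω) ^ (2 * k)) [false] = [false] ∧
    ((aPerm * genPerm j ω) ^ (2 * k)) [true] = [true] := by
  intro k
  induction k with
  | zero => simp
  | succ n ih =>
    have e : 2 * (n + 1) = 2 * n + 2 := by ring
    rw [e, pow_add]
    refine ⟨?_, ?_⟩
    · rw [Equiv.Perm.mul_apply, pow_two, Equiv.Perm.mul_apply,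
        tA_false_nil hc hj, tA_true_nil hc hj]
      exact ih.1
    · rw [Equiv.Perm.mul_apply, pow_two, Equiv.Perm.mul_apply,
        tA_true_nil hc hj, tA_false_nil hc hj]
      exact ih.2

lemma tA_pow_eq_one (hc : ∀ m, ω m = ω 0) (hj : j ≠ ω 0) :
    ∀ n : ℕ, (aPerm * genPerm j ω) ^ n = 1 → n = 0 := by
  intro n
  induction n using Nat.strong_induction_on with
  | _ n ih =>
    intro hn
    rcases Nat.even_or_odd n with ⟨m, hm⟩ | ⟨m, hm⟩
    · rcases Nat.eq_zero_or_pos m with rfl | hm0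
      · omega
      · have h2m : (aPerm * genPerm j ω) ^ (2 * m) = 1 := by
          rw [show 2 * m = n by omega]; exact hn
        have hTm : (aPerm * genPerm j ω) ^ m = 1 := by
          apply Equiv.ext
          intro v
          have h3 := tA_pow_true hc hj m v
          rw [h2m] at h3
          simp only [Equiv.Perm.one_apply] at h3
          have hv : ((aPerm * genPerm j ω) ^ m) v = v := by
            simpa using h3.symm
          simpa using hv
        have := ih m (by omega) hTm
        omega
    · have h1 : ((aPerm * genPerm j ω) ^ n) [false] = [false] := by
        rw [hn]; rfl
      rw [show n = 2 * m + 1 by omega, pow_succ, Equiv.Perm.mul_apply,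
        tA_false_nil hc hj, (tA_pow_len1 hc hj m).2] at h1
      simp at h1

lemma tA_zpow_eq_one (hc : ∀ m, ω m = ω 0) (hj : j ≠ ω 0) :
    ∀ z : ℤ, (aPerm * genPerm j ω) ^ z = 1 → z = 0 := by
  intro z hz
  rcases Int.natAbs_eq z with he | he
  · have h1 : (aPerm * genPerm j ω) ^ z.natAbs = 1 := by
      rw [← zpow_natCast, ← he]; exact hz
    have := tA_pow_eq_one hc hj z.natAbs h1
    omega
  · have h1 : (aPerm * genPerm j ω) ^ z.natAbs = 1 := by
      rw [he, zpow_neg, zpow_natCast, inv_eq_one] at hz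
      exact hz
    have := tA_pow_eq_one hc hj z.natAbs h1
    omega

end ConstAux

/-- The canonical homomorphism from the infinite dihedral group to a group `H`
with a chosen involution `A` and an element `T` inverted by conjugation by `A`. -/
def dihedralMonoidHom {H : Type*} [Group H] (A T : H)
    (hA : A * A = 1) (hTA : ∀ z : ℤ, T ^ z * A = A * T ^ (-z)) :
    DihedralGroup 0 →* H where
  toFun x := match x with
    | DihedralGroup.r i => T ^ (show ℤ from i)
    | DihedralGroup.sr i => A * T ^ (show ℤ from i)
  map_one' := zpow_zero T
  map_mul' := by
    have key : ∀ p q : ℤ, T ^ p * (A * T ^ q) = A * T ^ (q - p) := by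
      intro p q
      rw [← mul_assoc, hTA p, mul_assoc, ← zpow_add, neg_add_eq_sub]
    intro x y
    rcases x with i | i <;> rcases y with k | k
    · exact zpow_add T i k
    · exact (key i k).symm
    · show A * T ^ ((show ℤ from i) + (show ℤ from k))
        = A * T ^ (show ℤ from i) * T ^ (show ℤ from k)
      rw [mul_assoc, ← zpow_add]
    · show T ^ ((show ℤ from k) - (show ℤ from i))
        = (A * T ^ (show ℤ from i)) * (A * T ^ (show ℤ from k))
      rw [mul_assoc, key, ← mul_assoc, hA, one_mul]

lemma dihedralMonoidHom_injective {H : Type*} [Group H] (A T : H)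
    (hA : A * A = 1) (hTA : ∀ z : ℤ, T ^ z * A = A * T ^ (-z))
    (hAne : A ≠ 1) (hT : ∀ z : ℤ, T ^ z = 1 → z = 0) :
    Function.Injective (dihedralMonoidHom A T hA hTA) := by
  rw [injective_iff_map_eq_one]
  intro x hx
  rcases x with i | i
  · have h1 : T ^ (show ℤ from i) = 1 := hx
    have h2 := hT _ h1
    rw [DihedralGroup.one_def]
    exact congrArg DihedralGroup.r h2
  · exfalso
    have h1 : A * T ^ (show ℤ from i) = 1 := hx
    have h2 : T ^ (show ℤ from i) = A := by
      have h3 : T ^ (show ℤ from i) = A⁻¹ := eq_inv_of_mul_eq_one_right h1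
      rw [h3, inv_eq_of_mul_eq_one_left hA]
    have h3 : T ^ (2 * (show ℤ from i)) = 1 := by
      rw [two_mul, zpow_add, h2, hA]
    have h4 := hT _ h3
    have h5 : (show ℤ from i) = 0 := by omega
    rw [h5, zpow_zero] at h2
    exact hAne h2.symm

lemma iso_dihedral_of {H : Type*} [Group H] (A B : H)
    (hA : A * A = 1) (hB : B * B = 1) (hAne : A ≠ 1)
    (hT : ∀ z : ℤ, (A * B) ^ z = 1 → z = 0)
    (hgen : Subgroup.closure {A, B} = ⊤) :
    Nonempty (H ≃* DihedralGroup 0) := by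
  have hAinv : A⁻¹ = A := inv_eq_of_mul_eq_one_left hA
  have hBinv : B⁻¹ = B := inv_eq_of_mul_eq_one_left hB
  set T := A * B with hTdef
  have hconj : A * T * A⁻¹ = T⁻¹ := by
    rw [hTdef, mul_inv_rev, hAinv, hBinv, ← mul_assoc, hA, one_mul]
  have hTA : ∀ z : ℤ, T ^ z * A = A * T ^ (-z) := by
    intro z
    have h1 := map_zpow (MulAut.conj A) T z
    simp only [MulAut.conj_apply] at h1
    rw [hconj, inv_zpow, ← zpow_neg] at h1
    rw [← h1, hAinv, ← mul_assoc, ← mul_assoc, hA, one_mul]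
  have hinj : Function.Injective (dihedralMonoidHom A T hA hTA) :=
    dihedralMonoidHom_injective A T hA hTA hAne hT
  have hsurj : Function.Surjective (dihedralMonoidHom A T hA hTA) := by
    intro g
    have hrange : ({A, B} : Set H) ⊆ (dihedralMonoidHom A T hA hTA).range := by
      intro x hx
      simp only [Set.mem_insert_iff, Set.mem_singleton_iff] at hx
      rcases hx with rfl | rfl
      · refine ⟨DihedralGroup.sr 0, ?_⟩
        show x * T ^ (0 : ℤ) = x
        rw [zpow_zero, mul_one]
      · refine ⟨DihedralGroup.sr 1, ?_⟩
        show A * T ^ (1 : ℤ) = x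
        rw [zpow_one, hTdef, ← mul_assoc, hA, one_mul]
    have hle : Subgroup.closure {A, B} ≤ (dihedralMonoidHom A T hA hTA).range :=
      (Subgroup.closure_le _).2 hrange
    rw [hgen] at hle
    exact MonoidHom.mem_range.mp (hle (Subgroup.mem_top g))
  exact ⟨(MulEquiv.ofBijective _ ⟨hinj, hsurj⟩).symm⟩

/-- If ω is a constant sequence, then the Grigorchuk group `G_ω`
is isomorphic to the infinite dihedral group `D_∞`. -/
theorem constant_iso_infinite_dihedral (ω : Seq) (h : ∀ m, ω m = ω 0) :
    Nonempty (↥(G ω) ≃* DihedralGroup 0) := by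
  classical
  obtain ⟨j, hj⟩ : ∃ j : Fin 3, j ≠ ω 0 := by
    by_cases h0 : ω 0 = 0
    · exact ⟨1, by rw [h0]; decide⟩
    · exact ⟨0, fun e => h0 e.symm⟩
  have hβmem : genPerm j ω ∈ G ω := by
    fin_cases j
    · exact d_mem ω
    · exact c_mem ω
    · exact b_mem ω
  have hgenclosure : ∀ m : Fin 3,
      genPerm m ω ∈ Subgroup.closure ({aPerm, genPerm j ω} : Set (Equiv.Perm (List Bool))) := by
    intro m
    by_cases hm : m = ω 0
    · rw [hm, genPerm_const_self h]
      exact one_mem _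
    · have he : genPerm m ω = genPerm j ω := Equiv.ext fun w => genMap_const_ne h hm hj w
      rw [he]
      exact Subgroup.subset_closure (by simp)
  have hG : G ω = Subgroup.closure {aPerm, genPerm j ω} := by
    apply le_antisymm
    · rw [G]
      refine (Subgroup.closure_le _).2 ?_
      intro x hx
      simp only [Set.mem_insert_iff, Set.mem_singleton_iff] at hx
      rcases hx with rfl | rfl | rfl | rfl
      · exact Subgroup.subset_closure (by simp)
      · exact hgenclosure 2
      · exact hgenclosure 1
      · exact hgenclosure 0
    · refine (Subgroup.closure_le _).2 ?_
      intro x hx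
      simp only [Set.mem_insert_iff, Set.mem_singleton_iff] at hx
      rcases hx with rfl | rfl
      · exact aPerm_mem ω
      · exact hβmem
  refine iso_dihedral_of (⟨aPerm, aPerm_mem ω⟩ : ↥(G ω)) ⟨genPerm j ω, hβmem⟩ ?_ ?_ ?_ ?_ ?_
  · apply Subtype.ext
    show aPerm * aPerm = 1
    exact Equiv.ext fun w => aMap_invol w
  · apply Subtype.ext
    show genPerm j ω * genPerm j ω = 1
    exact Equiv.ext fun w => genMap_invol j w ω
  · intro he
    have h1 : aPerm = 1 := congrArg Subtype.val he
    have h2 : aPerm [false] = [false] := by rw [h1]; rfl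
    simp [aPerm, aMap] at h2
  · intro z hz
    apply tA_zpow_eq_one h hj z
    have h1 := congrArg Subtype.val hz
    simpa using h1
  · apply Subgroup.map_injective (G ω).subtype_injective
    rw [MonoidHom.map_closure, ← MonoidHom.range_eq_map, Subgroup.subtype_range]
    conv_rhs => rw [hG]
    congr 1
    simp [Set.image_insert_eq]

end Grig
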